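/- arXiv:2103.06481 — 3 statements merged into one kernel-verified Lean document; each statement's English description precedes it below -/
import Mathlib

section
/- There exists N such that for all integers n ≥ N and all integers s with n < s < 2n, one has ∑_{i=0}^{⌊n − s/2⌋} f_{n,i} − f_{n,s} < 0, where ⌊·⌋ denotes the integer part. -/
/-- `f_{n,i}`: the coefficient of `x^i` in `(1 + x + x²)^n`. -/
noncomputable def coeff3 (n i : ℕ) : ℕ :=
  (((1 + Polynomial.X + Polynomial.X ^ 2 : Polynomial ℕ)) ^ n).coeff i

/-!
By the symmetry `f_{n,s} = f_{n,2n-s}` it suffices to show `∑_{i ≤ t/2} f_{n,i} < f_{n,t}` for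
`t = 2n - s ∈ [1, n)`.

For `7t ≤ n` compare with binomial coefficients: `f_{n,i} ≤ C(2n,i)` and `f_{n,t} ≥ C(n,t)`,
while `C(n,·)` grows by a factor of at least `6` per step below `n/7`.

For `7t > n`, the partial sum is bounded by the Chernoff estimate
`S · y^t ≤ (1 + y² + y⁴)^n` (`0 < y ≤ 1`), and `f_{n,t}` from below by splitting
`(1 + x + x²)^n` into `q = ⌊n/30⌋` blocks `(1 + x + x²)^30`: supermultiplicativity of the
coefficients gives `f_{n,t} ≥ min(f_{30,d}, f_{30,d+1})^q` with `d = ⌊t/q⌋ ∈ [4, 30]`.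
A finite computation shows that, with `y = (d + 10)/50`, one block of the lower bound beats one
block of the Chernoff bound by a factor `2`; this absorbs the factor `3^30` lost to the leftover
`n - 30q` factors as soon as `2^q > 3^30`.
-/

open Polynomial Finset

namespace Polynomial

theorem coeff_mul_coeff_le_coeff_mul (p q : ℕ[X]) (i j : ℕ) :
    p.coeff i * q.coeff j ≤ (p * q).coeff (i + j) := by
  rw [coeff_mul]
  exact single_le_sum (f := fun x : ℕ × ℕ => p.coeff x.1 * q.coeff x.2)
    (fun _ _ => Nat.zero_le _) (mem_antidiagonal.mpr rfl : ((i, j) : ℕ × ℕ) ∈ _)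

theorem coeff_pow_le_coeff_pow_mul (p : ℕ[X]) (i u : ℕ) :
    p.coeff i ^ u ≤ (p ^ u).coeff (u * i) := by
  induction u with
  | zero => simp
  | succ u ih =>
    calc p.coeff i ^ (u + 1) = p.coeff i ^ u * p.coeff i := pow_succ _ _
      _ ≤ (p ^ u).coeff (u * i) * p.coeff i := Nat.mul_le_mul_right _ ih
      _ ≤ (p ^ (u + 1)).coeff ((u + 1) * i) := by
        rw [pow_succ, add_one_mul]; exact coeff_mul_coeff_le_coeff_mul _ _ _ _

theorem coeff_pow_le_coeff_pow_of_coeff_le {p q : ℕ[X]} (h : ∀ j, p.coeff j ≤ q.coeff j)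
    (n i : ℕ) : (p ^ n).coeff i ≤ (q ^ n).coeff i := by
  induction n generalizing i with
  | zero => rfl
  | succ n ih =>
    simp only [pow_succ, coeff_mul]
    exact sum_le_sum fun x _ => Nat.mul_le_mul (ih x.1) (h x.2)

theorem coeff_le_eval_one (p : ℕ[X]) (i : ℕ) : p.coeff i ≤ p.eval 1 := by
  rcases le_or_gt i p.natDegree with hi | hi
  · rw [eval_eq_sum_range]
    simpa using single_le_sum (f := fun j => p.coeff j) (fun _ _ => Nat.zero_le _)
      (mem_range.mpr (Nat.lt_succ_of_le hi))
  · rw [coeff_eq_zero_of_natDegree_lt hi]; exact Nat.zero_le _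

theorem coeff_eq_eval_div_pow_mod {B : ℕ} {p : ℕ[X]} (hB : ∀ j, p.coeff j < B) (i : ℕ) :
    p.coeff i = p.eval B / B ^ i % B := by
  induction i generalizing p with
  | zero =>
    conv_rhs => rw [← divX_mul_X_add p]
    simp [Nat.mod_eq_of_lt (hB 0)]
  | succ i ih =>
    have hdiv : p.eval B / B = p.divX.eval B := by
      conv_lhs => rw [← divX_mul_X_add p]
      simp only [eval_add, eval_mul, eval_X, eval_C]
      rw [Nat.mul_comm, Nat.mul_add_div (by have := hB 0; omega), Nat.div_eq_of_lt (hB 0),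
        Nat.add_zero]
    rw [pow_succ', ← Nat.div_div_eq_div_mul, hdiv, ← coeff_divX]
    exact ih fun j => by rw [coeff_divX]; exact hB _

theorem sum_coeff_mul_pow_le_aeval (p : ℕ[X]) {x : ℝ} (hx0 : 0 ≤ x) (hx1 : x ≤ 1) (m : ℕ) :
    (∑ i ∈ range (m + 1), (p.coeff i : ℝ)) * x ^ m ≤ aeval x p := by
  rw [aeval_eq_sum_range' (Nat.lt_add_of_pos_right (Nat.succ_pos m) :
    p.natDegree < p.natDegree + (m + 1)), sum_mul]
  calc ∑ i ∈ range (m + 1), (p.coeff i : ℝ) * x ^ m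
      ≤ ∑ i ∈ range (m + 1), p.coeff i • x ^ i := by
        refine sum_le_sum fun i hi => ?_
        rw [nsmul_eq_mul]
        exact mul_le_mul_of_nonneg_left
          (pow_le_pow_of_le_one hx0 hx1 (Nat.lt_succ_iff.mp (mem_range.mp hi))) (Nat.cast_nonneg _)
    _ ≤ ∑ i ∈ range (p.natDegree + (m + 1)), p.coeff i • x ^ i :=
        sum_le_sum_of_subset_of_nonneg (range_subset_range.mpr (Nat.le_add_left _ _))
          fun _ _ _ => by positivity

end Polynomial

theorem natDegree_trinomial_pow_le (n : ℕ) : ((1 + X + X ^ 2 : ℕ[X]) ^ n).natDegree ≤ 2 * n := by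
  rw [mul_comm]
  refine natDegree_pow_le_of_le n ?_
  compute_degree!

theorem reflect_trinomial_pow (n : ℕ) :
    reflect (2 * n) ((1 + X + X ^ 2 : ℕ[X]) ^ n) = (1 + X + X ^ 2) ^ n := by
  induction n with
  | zero => simp
  | succ n ih =>
    have h2 : reflect 2 (1 + X + X ^ 2 : ℕ[X]) = 1 + X + X ^ 2 := by
      ext i
      rw [coeff_reflect]
      rcases i with _ | _ | _ | i
      · simp [revAt_le, coeff_one, coeff_X]
      · simp [revAt_le, coeff_one, coeff_X]
      · simp [revAt_le, coeff_one, coeff_X]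
      · rw [revAt_eq_self_of_lt (by omega)]
    rw [pow_succ, Nat.mul_succ, reflect_mul _ _ (natDegree_trinomial_pow_le n)
      (by simpa using natDegree_trinomial_pow_le 1), ih, h2]

theorem coeff3_symm {n s : ℕ} (h : s ≤ 2 * n) : coeff3 n s = coeff3 n (2 * n - s) := by
  rw [coeff3, coeff3, ← revAt_le h, ← coeff_reflect, reflect_trinomial_pow]

theorem coeff3_zero (n : ℕ) : coeff3 n 0 = 1 := by
  simp [coeff3, coeff_zero_eq_eval_zero]

theorem coeff3_le_three_pow (n i : ℕ) : coeff3 n i ≤ 3 ^ n := by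
  have h := coeff_le_eval_one ((1 + X + X ^ 2 : ℕ[X]) ^ n) i
  norm_num at h
  exact h

theorem choose_le_coeff3 (n t : ℕ) : n.choose t ≤ coeff3 n t := by
  have h := coeff_pow_le_coeff_pow_of_coeff_le (p := 1 + X) (q := 1 + X + X ^ 2) (fun j => by
    rcases j with _ | _ | _ | j <;> simp [coeff_one, coeff_X]) n t
  simpa only [coeff3, coeff_one_add_X_pow, Nat.cast_id] using h

theorem coeff3_le_choose (n i : ℕ) : coeff3 n i ≤ (2 * n).choose i := by
  have h := coeff_pow_le_coeff_pow_of_coeff_le (p := 1 + X + X ^ 2) (q := (1 + X) ^ 2) (fun j => by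
    rcases j with _ | _ | _ | j <;> simp [add_sq, coeff_one, coeff_X]) n i
  simpa only [coeff3, ← pow_mul, mul_comm 2 n, coeff_one_add_X_pow, Nat.cast_id] using h

theorem coeff3_mul_coeff3_le (a b i j : ℕ) : coeff3 a i * coeff3 b j ≤ coeff3 (a + b) (i + j) := by
  simpa only [coeff3, pow_add] using coeff_mul_coeff_le_coeff_mul _ _ i j

theorem coeff3_pow_le (n i u : ℕ) : coeff3 n i ^ u ≤ coeff3 (u * n) (u * i) := by
  simpa only [coeff3, mul_comm u n, pow_mul] using coeff_pow_le_coeff_pow_mul _ i u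

theorem coeff3_eq_digit {n B : ℕ} (hB : 3 ^ n < B) (i : ℕ) :
    coeff3 n i = (1 + B + B ^ 2) ^ n / B ^ i % B := by
  rw [coeff3, coeff_eq_eval_div_pow_mod (fun j => (coeff3_le_three_pow n j).trans_lt hB)]
  simp

theorem sum_coeff3_mul_pow_le (n m : ℕ) {x : ℝ} (hx0 : 0 ≤ x) (hx1 : x ≤ 1) :
    (∑ i ∈ range (m + 1), (coeff3 n i : ℝ)) * x ^ m ≤ (1 + x + x ^ 2) ^ n := by
  have h := sum_coeff_mul_pow_le_aeval ((1 + X + X ^ 2 : ℕ[X]) ^ n) hx0 hx1 m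
  rwa [map_pow, map_add, map_add, map_one, map_pow, aeval_X] at h

namespace Nat

theorem mul_choose_le_choose_succ {n i c : ℕ} (h : c * (i + 1) ≤ n - i) :
    c * n.choose i ≤ n.choose (i + 1) := by
  refine Nat.le_of_mul_le_mul_right ?_ (succ_pos i)
  calc c * n.choose i * (i + 1) = n.choose i * (c * (i + 1)) := by ring
    _ ≤ n.choose i * (n - i) := Nat.mul_le_mul_left _ h
    _ = n.choose (i + 1) * (i + 1) := (choose_succ_right_eq n i).symm

theorem choose_mul_pow_le_choose {n j k c : ℕ} (h : (c + 1) * (j + k) ≤ n + 1) :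
    n.choose j * c ^ k ≤ n.choose (j + k) := by
  induction k with
  | zero => simp
  | succ k ih =>
    have h' : c * (j + k + 1) + (j + k + 1) ≤ n + 1 := by rw [← add_one_mul]; exact h
    calc n.choose j * c ^ (k + 1) = c * (n.choose j * c ^ k) := by ring
      _ ≤ c * n.choose (j + k) :=
        Nat.mul_le_mul_left _ (ih (le_trans (Nat.mul_le_mul_left _ (by omega)) h))
      _ ≤ n.choose (j + k + 1) := mul_choose_le_choose_succ (by omega)

theorem choose_le_choose_of_le_half {n i j : ℕ} (hij : i ≤ j) (hj : 2 * j ≤ n + 1) :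
    n.choose i ≤ n.choose j := by
  simpa [Nat.add_sub_cancel' hij] using choose_mul_pow_le_choose (c := 1) (k := j - i)
    (by rwa [Nat.add_sub_cancel' hij] : (1 + 1) * (i + (j - i)) ≤ n + 1)

theorem two_pow_mul_choose_two_mul_le {n m : ℕ} (h : 3 * m ≤ n) :
    2 ^ m * (2 * n).choose m ≤ 5 ^ m * n.choose m := by
  induction m with
  | zero => simp
  | succ m ih =>
    refine Nat.le_of_mul_le_mul_right ?_ (succ_pos m)
    calc 2 ^ (m + 1) * (2 * n).choose (m + 1) * (m + 1)
        = 2 ^ m * (2 * n).choose m * (2 * (2 * n - m)) := by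
          rw [mul_assoc, choose_succ_right_eq]; ring
      _ ≤ 5 ^ m * n.choose m * (5 * (n - m)) := Nat.mul_le_mul (ih (by omega)) (by omega)
      _ = 5 ^ (m + 1) * n.choose (m + 1) * (m + 1) := by
          rw [mul_assoc (5 ^ (m + 1)), choose_succ_right_eq]; ring

end Nat

theorem succ_mul_five_pow_lt {m t : ℕ} (h2m : 2 * m ≤ t) (hmt : m < t) :
    (m + 1) * 5 ^ m < 2 ^ m * 6 ^ (t - m) := by
  rcases Nat.eq_zero_or_pos m with rfl | hm
  · simpa using Nat.one_lt_pow (by omega) (by norm_num : 1 < 6)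
  calc (m + 1) * 5 ^ m ≤ 2 ^ m * 5 ^ m := Nat.mul_le_mul_right _ Nat.lt_two_pow_self
    _ < 2 ^ m * 6 ^ m :=
      Nat.mul_lt_mul_of_pos_left (Nat.pow_lt_pow_left (by norm_num) hm.ne') (by positivity)
    _ ≤ 2 ^ m * 6 ^ (t - m) := Nat.mul_le_mul_left _ (Nat.pow_le_pow_right (by norm_num) (by omega))

theorem sum_coeff3_lt_choose {n t : ℕ} (ht : 1 ≤ t) (hn : 7 * t ≤ n) :
    ∑ i ∈ range (t / 2 + 1), coeff3 n i < n.choose t := by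
  set m := t / 2 with hm
  have hsum : ∑ i ∈ range (m + 1), coeff3 n i ≤ (m + 1) * (2 * n).choose m := by
    calc ∑ i ∈ range (m + 1), coeff3 n i ≤ ∑ _i ∈ range (m + 1), (2 * n).choose m :=
          sum_le_sum fun i hi => (coeff3_le_choose n i).trans
            (Nat.choose_le_choose_of_le_half (by have := mem_range.mp hi; omega) (by omega))
      _ = (m + 1) * (2 * n).choose m := by rw [sum_const, card_range, smul_eq_mul]
  have hdouble : 2 ^ m * (2 * n).choose m ≤ 5 ^ m * n.choose m :=
    Nat.two_pow_mul_choose_two_mul_le (by omega)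
  have hgrowth : n.choose m * 6 ^ (t - m) ≤ n.choose t := by
    have h := Nat.choose_mul_pow_le_choose (n := n) (j := m) (k := t - m) (c := 6) (by omega)
    rwa [Nat.add_sub_cancel' (Nat.div_le_self t 2)] at h
  have hpos : 0 < n.choose m := Nat.choose_pos (by omega)
  refine Nat.lt_of_mul_lt_mul_left (a := 2 ^ m) ?_
  calc 2 ^ m * ∑ i ∈ range (m + 1), coeff3 n i ≤ 2 ^ m * ((m + 1) * (2 * n).choose m) :=
        Nat.mul_le_mul_left _ hsum
    _ = (m + 1) * (2 ^ m * (2 * n).choose m) := by ring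
    _ ≤ (m + 1) * (5 ^ m * n.choose m) := Nat.mul_le_mul_left _ hdouble
    _ = ((m + 1) * 5 ^ m) * n.choose m := by ring
    _ < (2 ^ m * 6 ^ (t - m)) * n.choose m :=
        Nat.mul_lt_mul_of_pos_right (succ_mul_five_pow_lt (by omega) (by omega)) hpos
    _ = 2 ^ m * (n.choose m * 6 ^ (t - m)) := by ring
    _ ≤ 2 ^ m * n.choose t := Nat.mul_le_mul_left _ hgrowth

theorem pow_min_coeff3_le {L q d r n : ℕ} (hr : r ≤ q) (hn : L * q ≤ n) :
    min (coeff3 L d) (coeff3 L (d + 1)) ^ q ≤ coeff3 n (d * q + r) := by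
  obtain ⟨s, rfl⟩ := Nat.exists_eq_add_of_le hr
  obtain ⟨e, rfl⟩ := Nat.exists_eq_add_of_le hn
  calc min (coeff3 L d) (coeff3 L (d + 1)) ^ (r + s)
      ≤ coeff3 L d ^ s * coeff3 L (d + 1) ^ r := by
        rw [pow_add, mul_comm]
        exact Nat.mul_le_mul (Nat.pow_le_pow_left (min_le_left _ _) _)
          (Nat.pow_le_pow_left (min_le_right _ _) _)
    _ ≤ coeff3 (s * L) (s * d) * coeff3 (r * L) (r * (d + 1)) :=
        Nat.mul_le_mul (coeff3_pow_le _ _ _) (coeff3_pow_le _ _ _)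
    _ ≤ coeff3 (s * L + r * L) (s * d + r * (d + 1)) * coeff3 e 0 := by
        rw [coeff3_zero, mul_one]; exact coeff3_mul_coeff3_le _ _ _ _
    _ ≤ coeff3 (s * L + r * L + e) (s * d + r * (d + 1) + 0) := coeff3_mul_coeff3_le _ _ _ _
    _ = coeff3 (L * (r + s) + e) (d * (r + s) + r) := by ring_nf

theorem sum_coeff3_lt_coeff3_of_certificate {L n q d r : ℕ} {y : ℝ} (hy0 : 0 < y) (hy1 : y ≤ 1)
    (hcert : 2 * (1 + y ^ 2 + y ^ 4) ^ L ≤ min (coeff3 L d) (coeff3 L (d + 1)) * y ^ (d + 1))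
    (hq : 3 ^ L < 2 ^ q) (hLn : L * q ≤ n) (hnL : n ≤ L * q + L) (hr : r ≤ q) :
    ∑ i ∈ range ((d * q + r) / 2 + 1), coeff3 n i < coeff3 n (d * q + r) := by
  set t := d * q + r
  set W := min (coeff3 L d) (coeff3 L (d + 1))
  set P := 1 + y ^ 2 + y ^ 4
  set S := ∑ i ∈ range (t / 2 + 1), (coeff3 n i : ℝ)
  set Y := y ^ ((d + 1) * q)
  have hP3 : P ≤ 3 := by
    linarith [pow_le_one₀ hy0.le hy1 (n := 2), pow_le_one₀ hy0.le hy1 (n := 4)]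
  have hchernoff : S * Y ≤ P ^ (L * q) * 3 ^ L := by
    calc S * Y ≤ S * (y ^ 2) ^ (t / 2) := by
          rw [← pow_mul]
          refine mul_le_mul_of_nonneg_left (pow_le_pow_of_le_one hy0.le hy1 ?_) (by positivity)
          have : t ≤ (d + 1) * q := by rw [add_one_mul]; omega
          omega
      _ ≤ (1 + y ^ 2 + (y ^ 2) ^ 2) ^ n :=
          sum_coeff3_mul_pow_le n _ (by positivity) (pow_le_one₀ hy0.le hy1)
      _ = P ^ (L * q) * P ^ (n - L * q) := by rw [← pow_mul, ← pow_add, Nat.add_sub_cancel' hLn]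
      _ ≤ P ^ (L * q) * 3 ^ L := by
          gcongr
          exact (pow_le_pow_left₀ (by positivity) hP3 _).trans
            (pow_le_pow_right₀ (by norm_num) (by omega))
  have hblocks : 2 ^ q * P ^ (L * q) ≤ W ^ q * Y := by
    rw [pow_mul, ← mul_pow, show Y = (y ^ (d + 1)) ^ q from pow_mul _ _ _, ← mul_pow]
    exact pow_le_pow_left₀ (by positivity) hcert q
  have hSW : S < W ^ q := by
    have hWY : 0 < (W : ℝ) ^ q * Y := lt_of_lt_of_le (by positivity) hblocks
    have hq' : (3 : ℝ) ^ L < 2 ^ q := by exact_mod_cast hq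
    refine lt_of_mul_lt_mul_right (a := Y * 2 ^ q) ?_ (by positivity)
    calc S * (Y * 2 ^ q) = S * Y * 2 ^ q := by ring
      _ ≤ P ^ (L * q) * 3 ^ L * 2 ^ q := by gcongr
      _ = 3 ^ L * (2 ^ q * P ^ (L * q)) := by ring
      _ ≤ 3 ^ L * (W ^ q * Y) := by gcongr
      _ < 2 ^ q * (W ^ q * Y) := by gcongr
      _ = W ^ q * (Y * 2 ^ q) := by ring
  have hcast : ((∑ i ∈ range (t / 2 + 1), coeff3 n i : ℕ) : ℝ) < (W ^ q : ℕ) := by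
    push_cast; exact hSW
  exact (Nat.cast_lt.mp hcast).trans_le (pow_min_coeff3_le hr hLn)

theorem trinomial_certificate {d : ℕ} (hd4 : 4 ≤ d) (hd30 : d ≤ 30) :
    2 * (1 + ((d + 10) / 50 : ℝ) ^ 2 + ((d + 10) / 50 : ℝ) ^ 4) ^ 30 ≤
      min (coeff3 30 d) (coeff3 30 (d + 1)) * ((d + 10) / 50 : ℝ) ^ (d + 1) := by
  -- `coeff3` is not computable: `decide` evaluates `f_{30,i}` as the `i`-th base-`B` digit of
  -- `(1 + B + B²)^30`, `B = 3^30 + 1` (`coeff3_eq_digit`).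
  have hnat : ∀ d < 31, 4 ≤ d →
      2 * (50 ^ 4 + (d + 10) ^ 2 * 50 ^ 2 + (d + 10) ^ 4) ^ 30 * 50 ^ (d + 1) ≤
        min ((1 + (3 ^ 30 + 1) + (3 ^ 30 + 1) ^ 2) ^ 30 / (3 ^ 30 + 1) ^ d % (3 ^ 30 + 1))
          ((1 + (3 ^ 30 + 1) + (3 ^ 30 + 1) ^ 2) ^ 30 / (3 ^ 30 + 1) ^ (d + 1) % (3 ^ 30 + 1)) *
        (d + 10) ^ (d + 1) * 50 ^ (4 * 30) := by
    decide
  have h := hnat d (by omega) hd4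
  rw [← coeff3_eq_digit (Nat.lt_succ_self _), ← coeff3_eq_digit (Nat.lt_succ_self _)] at h
  have key : 1 + ((d + 10) / 50 : ℝ) ^ 2 + ((d + 10) / 50 : ℝ) ^ 4 =
      ((50 ^ 4 + (d + 10) ^ 2 * 50 ^ 2 + (d + 10) ^ 4 : ℕ) : ℝ) / 50 ^ 4 := by
    push_cast; ring
  rw [key, div_pow, div_pow, ← pow_mul, ← mul_div_assoc, ← mul_div_assoc,
    div_le_div_iff₀ (by positivity) (by positivity)]
  exact_mod_cast h

theorem sum_coeff3_lt_coeff3 {n t : ℕ} (hn : 1440 ≤ n) (ht : 1 ≤ t) (htn : t < n) :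
    ∑ i ∈ range (t / 2 + 1), coeff3 n i < coeff3 n t := by
  rcases le_or_gt (7 * t) n with h7 | h7
  · exact (sum_coeff3_lt_choose ht h7).trans_le (choose_le_coeff3 n t)
  set q := n / 30 with hq
  have hq48 : 48 ≤ q := by omega
  obtain ⟨d, r, hr, rfl⟩ : ∃ d r, r < q ∧ t = d * q + r :=
    ⟨t / q, t % q, Nat.mod_lt _ (by omega), (Nat.div_add_mod' t q).symm⟩
  have hd4 : 4 ≤ d := by
    by_contra! h
    have : d * q ≤ 3 * q := Nat.mul_le_mul_right q (by omega)
    omega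
  have hd30 : d ≤ 30 := by
    by_contra! h
    have : 31 * q ≤ d * q := Nat.mul_le_mul_right q h
    omega
  refine sum_coeff3_lt_coeff3_of_certificate (by positivity) ?_ (trinomial_certificate hd4 hd30)
    ((by norm_num : 3 ^ 30 < 2 ^ 48).trans_le (Nat.pow_le_pow_right (by norm_num) hq48))
    (Nat.mul_div_le n 30) (by omega) hr.le
  rw [div_le_one (by norm_num)]
  exact_mod_cast (by omega : d + 10 ≤ 50)

/-- For `n` large and `n < s < 2n`, `∑_{i=0}^{⌊n - s/2⌋} f_{n,i} - f_{n,s} < 0`. -/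
theorem sum_lt_coeff :
    ∃ N : ℕ, ∀ n : ℕ, N ≤ n → ∀ s : ℕ, n < s → s < 2 * n →
      (∑ i ∈ Finset.range ((⌊(n : ℝ) - (s : ℝ) / 2⌋).toNat + 1), (coeff3 n i : ℤ)) -
        (coeff3 n s : ℤ) < 0 := by
  refine ⟨1440, fun n hn s hns hs2n => ?_⟩
  have hfloor : (⌊(n : ℝ) - (s : ℝ) / 2⌋).toNat = (2 * n - s) / 2 := by
    rw [Int.floor_toNat, ← Nat.floor_div_eq_div (K := ℝ)]
    congr 1
    push_cast [Nat.cast_sub hs2n.le]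
    ring
  rw [hfloor, coeff3_symm hs2n.le, sub_neg]
  exact_mod_cast sum_coeff3_lt_coeff3 hn (by omega) (by omega)
end

section
/- There exists N such that for all integers n ≥ N and every feasible vector (t₀, …, t_{2n}) for the cap set linear program satisfying t_i = 0 for all i > n, there exists a feasible vector (t₀', …, t_{2n}') with t_i' = 0 for all i ≥ n and 3·∑_{i=0}^{2n} f_{n,i}·t_i' ≤ 3·∑_{i=0}^{2n} f_{n,i}·t_i. -/
/-- A vector `(t₀, …, t_{2n})` (given as a function on `ℕ`) is feasible for the
cap set linear program if all its entries are nonnegative and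
`t_i + t_j + t_k ≥ 1` whenever `i + j + k ≤ 2n`. -/
def LPFeasible (n : ℕ) (t : ℕ → ℝ) : Prop :=
  (∀ i, i ≤ 2 * n → 0 ≤ t i) ∧
  (∀ i j k : ℕ, i + j + k ≤ 2 * n → 1 ≤ t i + t j + t k)

/-- The objective value `3 ∑_{i=0}^{2n} f_{n,i} t_i` of the cap set linear program. -/
noncomputable def LPObj (n : ℕ) (t : ℕ → ℝ) : ℝ :=
  3 * ∑ i ∈ Finset.range (2 * n + 1), (coeff3 n i : ℝ) * t i

/-!
Write `f i = coeff3 n i` and `ε = t n`. Adding `ε` at every index `i ≤ n / 2`, once more at `0`,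
and deleting everything from index `n` on keeps the vector feasible: a triple with an index `≥ n`
has its other two indices summing to at most `n`, the smaller of them is `≤ n / 2`, and the triple
they form with `n` was covered by `t`. The objective changes by
`3 ε (1 + ∑_{i ≤ n/2} f i - f n)`, which is `≤ 0` for large `n`: Rankin's trick at `x = 1/4`
bounds the lower half of the coefficients of `(1 + x + x²)ⁿ` by `(21/8)ⁿ`, while the central
coefficient is at least `C(4m, 2m) C(2m, m) ≥ 64ᵐ / poly(m)` for `m = n / 4`, which grows like
`(2√2)ⁿ`.
-/

open Polynomial Finset

theorem Polynomial.coeff_mul_coeff_le_coeff_mul_s16 {R : Type*} [Semiring R] [PartialOrder R]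
    [CanonicallyOrderedAdd R] [IsOrderedAddMonoid R] (p q : R[X]) (i j : ℕ) :
    p.coeff i * q.coeff j ≤ (p * q).coeff (i + j) := by
  rw [coeff_mul]
  exact single_le_sum (f := fun x : ℕ × ℕ => p.coeff x.1 * q.coeff x.2)
    (fun _ _ => zero_le) (a := (i, j)) (mem_antidiagonal.mpr rfl)

theorem monotone_coeff3_diag : Monotone fun n => coeff3 n n := by
  refine monotone_nat_of_le_succ fun n => ?_
  have h11 : coeff3 1 1 = 1 := by simp [coeff3, coeff_X, coeff_one]
  simpa [h11] using coeff3_mul_coeff3_le n 1 n 1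

theorem choose_mul_centralBinom_le_coeff3 (n k : ℕ) (hk : 2 * k ≤ n) :
    n.choose (2 * k) * k.centralBinom ≤ coeff3 n n := by
  have hsplit : (1 + X + X ^ 2 : ℕ[X]) = expand ℕ 2 (1 + X) + X := by
    simp only [map_add, map_one, expand_X]; ring
  have hterm :
      ((expand ℕ 2 (1 + X)) ^ (2 * k) * X ^ (n - 2 * k) * (n.choose (2 * k) : ℕ[X])).coeff n
        = n.choose (2 * k) * k.centralBinom := by
    rw [← C_eq_natCast, coeff_mul_C, ← map_pow, coeff_mul_X_pow', if_pos (Nat.sub_le n _),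
      Nat.sub_sub_self hk, coeff_expand_mul' two_pos, coeff_one_add_X_pow,
      Nat.centralBinom_eq_two_mul_choose, mul_comm]
    simp only [Nat.cast_id]
  unfold coeff3
  rw [hsplit, add_pow, finsetSum_coeff, ← hterm]
  exact single_le_sum
    (f := fun j => ((expand ℕ 2 (1 + X)) ^ j * X ^ (n - j) * (n.choose j : ℕ[X])).coeff n)
    (fun _ _ => zero_le) (mem_range.mpr (show 2 * k < n + 1 by omega))

theorem sixtyFour_pow_le (m : ℕ) :
    64 ^ m ≤ (4 * m + 1) * (2 * m + 1) * coeff3 (4 * m) (4 * m) := by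
  have h := choose_mul_centralBinom_le_coeff3 (2 * (2 * m)) m (by omega)
  have h1 := Nat.four_pow_le_two_mul_add_one_mul_central_binom (2 * m)
  have h2 := Nat.four_pow_le_two_mul_add_one_mul_central_binom m
  rw [← Nat.centralBinom_eq_two_mul_choose] at h h1 h2
  rw [show 4 * m = 2 * (2 * m) by ring]
  calc 64 ^ m = 4 ^ (2 * m) * 4 ^ m := by rw [pow_mul, ← mul_pow]; norm_num
    _ ≤ (2 * (2 * m) + 1) * (2 * m).centralBinom * ((2 * m + 1) * m.centralBinom) :=
        Nat.mul_le_mul h1 h2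
    _ = (2 * (2 * m) + 1) * (2 * m + 1) * ((2 * m).centralBinom * m.centralBinom) := by ring
    _ ≤ _ := Nat.mul_le_mul_left _ h

theorem eight_pow_le_coeff3_sq (n : ℕ) : 8 ^ n ≤ 512 * (n + 1) ^ 4 * coeff3 n n ^ 2 := by
  set m := n / 4
  have hmono : coeff3 (4 * m) (4 * m) ≤ coeff3 n n := monotone_coeff3_diag (by omega)
  have hpoly : (4 * m + 1) * (2 * m + 1) ≤ (n + 1) ^ 2 := by
    rw [sq]; exact Nat.mul_le_mul (by omega) (by omega)
  calc 8 ^ n ≤ 8 ^ (4 * m + 3) := Nat.pow_le_pow_right (by norm_num) (by omega)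
    _ = 512 * (64 ^ m) ^ 2 := by
        rw [pow_add, pow_mul, ← pow_mul 64 m 2, mul_comm m 2, pow_mul]; norm_num [mul_comm]
    _ ≤ 512 * ((4 * m + 1) * (2 * m + 1) * coeff3 (4 * m) (4 * m)) ^ 2 := by
        gcongr; exact sixtyFour_pow_le m
    _ ≤ 512 * ((n + 1) ^ 2 * coeff3 n n) ^ 2 := by gcongr
    _ = 512 * (n + 1) ^ 4 * coeff3 n n ^ 2 := by ring

theorem poly_mul_pow_le_pow (n : ℕ) (hn : 193 ≤ n) :
    2048 * (n + 1) ^ 4 * 441 ^ n ≤ 512 ^ n := by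
  induction n, hn using Nat.le_induction with
  | base => norm_num
  | succ n hn ih =>
    have hstep : 441 * (n + 2) ^ 4 ≤ 512 * (n + 1) ^ 4 := by
      -- `27 (n + 2) ≤ 28 (n + 1)` and `441 * 28 ^ 4 ≤ 512 * 27 ^ 4`
      have h := Nat.pow_le_pow_left (show 27 * (n + 2) ≤ 28 * (n + 1) by omega) 4
      rw [mul_pow, mul_pow] at h
      linarith [Nat.zero_le ((n + 1) ^ 4)]
    calc 2048 * (n + 1 + 1) ^ 4 * 441 ^ (n + 1)
        = 2048 * 441 ^ n * (441 * (n + 2) ^ 4) := by ring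
      _ ≤ 2048 * 441 ^ n * (512 * (n + 1) ^ 4) := by gcongr
      _ = 512 * (2048 * (n + 1) ^ 4 * 441 ^ n) := by ring
      _ ≤ 512 * 512 ^ n := Nat.mul_le_mul_left 512 ih
      _ = 512 ^ (n + 1) := (pow_succ' 512 n).symm

theorem two_mul_pow_le_coeff3 (n : ℕ) (hn : 193 ≤ n) : 2 * 21 ^ n ≤ 8 ^ n * coeff3 n n := by
  have hpos : 0 < 512 * (n + 1) ^ 4 := by positivity
  rw [← Nat.pow_le_pow_iff_left two_ne_zero, ← Nat.mul_le_mul_left_iff hpos]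
  calc 512 * (n + 1) ^ 4 * (2 * 21 ^ n) ^ 2 = 2048 * (n + 1) ^ 4 * 441 ^ n := by
        rw [mul_pow, ← pow_mul, mul_comm n 2, pow_mul]; ring
    _ ≤ 512 ^ n := poly_mul_pow_le_pow n hn
    _ = 64 ^ n * 8 ^ n := by rw [← mul_pow]; norm_num
    _ ≤ 64 ^ n * (512 * (n + 1) ^ 4 * coeff3 n n ^ 2) :=
        Nat.mul_le_mul_left _ (eight_pow_le_coeff3_sq n)
    _ = 512 * (n + 1) ^ 4 * (8 ^ n * coeff3 n n) ^ 2 := by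
        rw [mul_pow, ← pow_mul, mul_comm n 2, pow_mul]; ring

theorem sum_coeff3_mul_pow (n : ℕ) (x : ℝ) :
    ∑ i ∈ range (2 * n + 1), (coeff3 n i : ℝ) * x ^ i = (1 + x + x ^ 2) ^ n := by
  have hdeg : ((1 + X + X ^ 2 : ℕ[X]) ^ n).natDegree < 2 * n + 1 := by
    have : (1 + X + X ^ 2 : ℕ[X]).natDegree ≤ 2 := by compute_degree
    linarith [natDegree_pow_le_of_le n this]
  have h := eval₂_eq_sum_range' (Nat.castRingHom ℝ) hdeg x
  rw [eval₂_pow] at h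
  simpa [coeff3] using h.symm

theorem pow_mul_sum_coeff3_le (n k : ℕ) (hk : k ≤ 2 * n) {x : ℝ} (hx0 : 0 ≤ x)
    (hx1 : x ≤ 1) :
    x ^ k * ∑ i ∈ range (k + 1), (coeff3 n i : ℝ) ≤ (1 + x + x ^ 2) ^ n := by
  rw [← sum_coeff3_mul_pow, mul_sum]
  calc ∑ i ∈ range (k + 1), x ^ k * (coeff3 n i : ℝ)
      ≤ ∑ i ∈ range (k + 1), (coeff3 n i : ℝ) * x ^ i := by
        refine sum_le_sum fun i hi => ?_
        rw [mul_comm]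
        exact mul_le_mul_of_nonneg_left
          (pow_le_pow_of_le_one hx0 hx1 (Nat.lt_succ_iff.mp (mem_range.mp hi))) (by positivity)
    _ ≤ ∑ i ∈ range (2 * n + 1), (coeff3 n i : ℝ) * x ^ i :=
        sum_le_sum_of_subset_of_nonneg (range_subset_range.mpr (by omega))
          fun _ _ _ => by positivity

theorem sum_coeff3_range_half_le (n : ℕ) :
    ∑ i ∈ range (n / 2 + 1), (coeff3 n i : ℝ) ≤ (21 / 8) ^ n := by
  have hrankin :=
    pow_mul_sum_coeff3_le n (n / 2) (by omega) (x := 1 / 4) (by norm_num) (by norm_num)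
  have hfour : (4 : ℝ) ^ (n / 2) ≤ 2 ^ n := by
    rw [show (4 : ℝ) = 2 ^ 2 by norm_num, ← pow_mul]
    exact pow_le_pow_right₀ one_le_two (Nat.mul_div_le n 2)
  calc ∑ i ∈ range (n / 2 + 1), (coeff3 n i : ℝ)
      = 4 ^ (n / 2) * ((1 / 4) ^ (n / 2) * ∑ i ∈ range (n / 2 + 1), (coeff3 n i : ℝ)) := by
        rw [← mul_assoc, ← mul_pow]; norm_num
    _ ≤ 2 ^ n * (1 + 1 / 4 + (1 / 4) ^ 2) ^ n := by gcongr
    _ = (21 / 8) ^ n := by rw [← mul_pow]; norm_num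

theorem one_add_sum_coeff3_range_half_le (n : ℕ) (hn : 193 ≤ n) :
    1 + ∑ i ∈ range (n / 2 + 1), (coeff3 n i : ℝ) ≤ coeff3 n n := by
  have hcentral : 2 * (21 / 8 : ℝ) ^ n ≤ coeff3 n n := by
    rw [div_pow, ← mul_div_assoc, div_le_iff₀ (by positivity), mul_comm (coeff3 n n : ℝ)]
    exact_mod_cast two_mul_pow_le_coeff3 n hn
  have hone : (1 : ℝ) ≤ (21 / 8) ^ n := one_le_pow₀ (by norm_num)
  linarith [sum_coeff3_range_half_le n]

def dropTop (n : ℕ) (t : ℕ → ℝ) (i : ℕ) : ℝ :=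
  (if i < n then t i else 0) + ((if i ≤ n / 2 then t n else 0) + (if i = 0 then t n else 0))

section dropTop

variable {n : ℕ} {t : ℕ → ℝ}

theorem dropTop_eq_zero (hn : 0 < n) {i : ℕ} (hi : n ≤ i) : dropTop n t i = 0 := by
  simp [dropTop, show ¬ i < n by omega, show ¬ i ≤ n / 2 by omega, show i ≠ 0 by omega]

theorem lpFeasible_dropTop (ht : LPFeasible n t) (hn : 0 < n) : LPFeasible n (dropTop n t) := by
  obtain ⟨hnonneg, hcover⟩ := ht
  have htop : 0 ≤ t n := hnonneg n (by omega)
  have hge : ∀ i, i < n → t i ≤ dropTop n t i := fun i hi => by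
    simp only [dropTop, if_pos hi]; split_ifs <;> linarith
  have hge_add : ∀ i, i ≤ n / 2 → t i + t n ≤ dropTop n t i := fun i hi => by
    simp only [dropTop, if_pos (show i < n by omega), if_pos hi]; split_ifs <;> linarith
  have hdrop_nonneg : ∀ i, 0 ≤ dropTop n t i := fun i => by
    rcases lt_or_ge i n with hi | hi
    · linarith [hge i hi, hnonneg i (by omega)]
    · rw [dropTop_eq_zero hn hi]
  have hzero : 1 ≤ dropTop n t 0 := by
    have h0 : dropTop n t 0 = t 0 + t n + t n := by simp [dropTop, hn, add_assoc]
    linarith [hcover 0 n n (by omega)]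
  -- `t n` was added at the smaller index of the pair, which pays for the triple `(a, b, n)`
  have hpair : ∀ a b, a + b ≤ n → 1 ≤ dropTop n t a + dropTop n t b := by
    intro a b hab
    wlog hle : a ≤ b generalizing a b
    · linarith [this b a (by omega) (by omega)]
    rcases lt_or_ge b n with hb | hb
    · linarith [hge_add a (by omega), hge b hb, hcover a b n (by omega)]
    · obtain rfl : a = 0 := by omega
      linarith [hdrop_nonneg b]
  refine ⟨fun i _ => hdrop_nonneg i, fun i j k hijk => ?_⟩
  by_cases hi : n ≤ i
  · linarith [hpair j k (by omega), hdrop_nonneg i]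
  by_cases hj : n ≤ j
  · linarith [hpair i k (by omega), hdrop_nonneg j]
  by_cases hk : n ≤ k
  · linarith [hpair i j (by omega), hdrop_nonneg k]
  linarith [hcover i j k hijk, hge i (by omega), hge j (by omega), hge k (by omega)]

theorem LPObj_dropTop (hvan : ∀ i, n < i → i ≤ 2 * n → t i = 0) :
    LPObj n (dropTop n t) + 3 * t n * coeff3 n n
      = LPObj n t + 3 * t n * (1 + ∑ i ∈ range (n / 2 + 1), (coeff3 n i : ℝ)) := by
  have hsplit : ∀ i ∈ range (2 * n + 1), (coeff3 n i : ℝ) * t i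
      = coeff3 n i * (if i < n then t i else 0) + (if n = i then coeff3 n n * t n else 0) := by
    intro i hi
    rcases lt_trichotomy i n with h | rfl | h
    · simp [h, h.ne']
    · simp
    · simp [hvan i h (by simpa [Nat.lt_succ_iff] using hi), show ¬ i < n by omega, h.ne]
  have hlow : ∑ i ∈ range (2 * n + 1), (if i ≤ n / 2 then (coeff3 n i : ℝ) * t n else 0)
      = t n * ∑ i ∈ range (n / 2 + 1), (coeff3 n i : ℝ) := by
    rw [← sum_filter, ← sum_mul, mul_comm]
    congr 2
    ext i
    simp only [mem_filter, mem_range]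
    omega
  unfold LPObj dropTop
  simp only [mul_add, sum_add_distrib, sum_congr rfl hsplit, mul_ite, mul_zero, hlow,
    sum_ite_eq, sum_ite_eq', mem_range, coeff3_zero]
  simp only [show n < 2 * n + 1 by omega, show 0 < 2 * n + 1 by omega, if_true]
  ring

end dropTop

/-- For large `n`, any feasible vector vanishing above `n` can be improved to one
vanishing at and above `n`. -/
theorem lp_improve_at_n :
    ∃ N : ℕ, ∀ n : ℕ, N ≤ n → ∀ t : ℕ → ℝ, LPFeasible n t →
      (∀ i, n < i → i ≤ 2 * n → t i = 0) →
      ∃ t' : ℕ → ℝ, LPFeasible n t' ∧ (∀ i, n ≤ i → i ≤ 2 * n → t' i = 0) ∧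
        LPObj n t' ≤ LPObj n t := by
  refine ⟨193, fun n hn t ht hvan => ⟨dropTop n t, lpFeasible_dropTop ht (by omega),
    fun i hi _ => dropTop_eq_zero (by omega) hi, ?_⟩⟩
  have htop : 0 ≤ 3 * t n := by linarith [ht.1 n (by omega)]
  have hcost := mul_le_mul_of_nonneg_left (one_add_sum_coeff3_range_half_le n hn) htop
  linarith [LPObj_dropTop hvan]
end

section
/- There exists S such that for all integers s ≥ S, setting n = 3s − 1, the vector (t₀*, …, t_{2n}*) defined by t_i* = 1 for 0 ≤ i ≤ 2s − 4, t_{2s−3}* = 4/5, t_{2s−2}* = 3/5, t_{2s−1}* = 2/5, t_{2s}* = 1/5, and t_i* = 0 for i ≥ 2s + 1, is an optimal solution of the cap set linear program: it is feasible, and every feasible vector (t₀, …, t_{2n}) satisfies 3·∑_{i=0}^{2n} f_{n,i}·t_i ≥ 3·∑_{i=0}^{2n} f_{n,i}·t_i*. -/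
open Finset Polynomial

namespace CapSetLP

lemma coeff_trinomial_mul (q : ℕ[X]) (k : ℕ) :
    ((1 + X + X ^ 2) * q).coeff (k + 2) = q.coeff (k + 2) + q.coeff (k + 1) + q.coeff k := by
  simp [add_mul, coeff_X_pow_mul']

lemma coeff_X_mul_derivative (p : ℕ[X]) (k : ℕ) : (X * derivative p).coeff k = k * p.coeff k := by
  cases k <;> simp [coeff_derivative, mul_comm]

lemma coeff3_zero (n : ℕ) : coeff3 n 0 = 1 := by
  simp [coeff3, coeff_zero_eq_eval_zero]

lemma coeff3_one (n : ℕ) : coeff3 n 1 = n := by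
  induction n with
  | zero => simp [coeff3, coeff_one]
  | succ m ih =>
    rw [coeff3, pow_succ, mul_comm, add_mul, add_mul, one_mul, coeff_add, coeff_add, coeff_X_mul]
    simp only [coeff_X_pow_mul']
    change coeff3 m 1 + coeff3 m 0 = m + 1
    rw [ih, coeff3_zero]

lemma coeff3_recurrence (n k : ℕ) :
    (k + 2) * coeff3 n (k + 2) + (k + 1) * coeff3 n (k + 1) + k * coeff3 n k
      = n * coeff3 n (k + 1) + 2 * n * coeff3 n k := by
  have key : (1 + X + X ^ 2) * (X * derivative ((1 + X + X ^ 2 : ℕ[X]) ^ n))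
      = C n * ((X + 2 * X ^ 2) * (1 + X + X ^ 2) ^ n) := by
    rcases n with _ | m
    · simp
    · rw [derivative_pow_succ, derivative_add, derivative_add, derivative_one, derivative_X,
        derivative_X_sq, show (C 2 : ℕ[X]) = 2 from rfl]
      simp only [map_add, C_1, Nat.cast_id]
      ring
  have := congrArg (coeff · (k + 2)) key
  simp only [coeff_trinomial_mul, coeff_X_mul_derivative, coeff_C_mul] at this
  simpa [add_mul, coeff_X_pow_mul', mul_add, coeff3, mul_assoc, mul_comm, mul_left_comm, add_assoc] using this

lemma coeff3_recurrence_real (n k : ℕ) :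
    ((k : ℝ) + 2) * coeff3 n (k + 2)
      = ((n : ℝ) - 1 - k) * coeff3 n (k + 1) + (2 * n - k) * coeff3 n k := by
  have h := congrArg (Nat.cast : ℕ → ℝ) (coeff3_recurrence n k)
  push_cast at h
  linarith

lemma coeff3_upper_succ {n k : ℕ} (hk : k ≤ 2 * n)
    (h : 8 * (coeff3 n k : ℝ) ≤ 5 * coeff3 n (k + 1)) :
    8 * ((k : ℝ) + 2) * coeff3 n (k + 2) ≤ (18 * n - 13 * k - 8) * coeff3 n (k + 1) := by
  have hb : (0 : ℝ) ≤ 2 * n - k := by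
    have : (k : ℝ) ≤ 2 * n := by exact_mod_cast hk
    linarith
  have hrec := coeff3_recurrence_real n k
  nlinarith [mul_le_mul_of_nonneg_left h hb]

lemma coeff3_lower_succ {n k : ℕ} (hn : 400 ≤ n) (hk : 3 * k ≤ 2 * n + 14)
    (h : 8 * ((k : ℝ) + 1) * coeff3 n (k + 1) ≤ (18 * n - 13 * k + 5) * coeff3 n k) :
    8 * (coeff3 n (k + 1) : ℝ) ≤ 5 * coeff3 n (k + 2) := by
  have hnR : (400 : ℝ) ≤ n := by exact_mod_cast hn
  have hkR : 3 * (k : ℝ) ≤ 2 * n + 14 := by exact_mod_cast hk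
  have hf : (0 : ℝ) ≤ coeff3 n (k + 1) := Nat.cast_nonneg _
  have hM : 0 < (18 * n - 13 * k + 5 : ℝ) := by linarith
  -- equivalently `(30n - 43k)(n - k) ≥ 91n - 56k + 35`, which holds up to `k ≈ 30n/43`
  have hD : 8 * (k + 2) * (18 * n - 13 * k + 5)
      ≤ 5 * (n - 1 - k) * (18 * n - 13 * k + 5) + 40 * (2 * n - k) * (k + 1 : ℝ) := by
    nlinarith [mul_le_mul (show (4 * n - 602 : ℝ) ≤ 3 * (30 * n - 43 * k) by linarith)
      (show (n - 14 : ℝ) ≤ 3 * (n - k) by linarith) (by linarith) (by linarith)]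
  have hrec := coeff3_recurrence_real n k
  have key : (k + 2) * (18 * n - 13 * k + 5) * (8 * coeff3 n (k + 1))
      ≤ (k + 2) * (18 * n - 13 * k + 5) * (5 * coeff3 n (k + 2) : ℝ) := by
    linear_combination mul_le_mul_of_nonneg_left h (show (0 : ℝ) ≤ 5 * (2 * n - k) by linarith)
      + mul_le_mul_of_nonneg_right hD hf - 5 * (18 * n - 13 * k + 5) * hrec
  exact le_of_mul_le_mul_left key (by positivity)

lemma coeff3_ratio_bounds {n : ℕ} (hn : 400 ≤ n) : ∀ k, 3 * k ≤ 2 * n + 17 →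
    8 * (coeff3 n k : ℝ) ≤ 5 * coeff3 n (k + 1) ∧
      8 * ((k : ℝ) + 1) * coeff3 n (k + 1) ≤ (18 * n - 13 * k + 5) * coeff3 n k
  | 0, _ => by
    simp only [zero_add, coeff3_zero, coeff3_one, Nat.cast_one, Nat.cast_zero, mul_zero, sub_zero]
    constructor <;> linarith [(show (400 : ℝ) ≤ n by exact_mod_cast hn)]
  | k + 1, hk =>
    have ih := coeff3_ratio_bounds hn k (by omega)
    ⟨coeff3_lower_succ hn (by omega) ih.2, by push_cast; linarith [coeff3_upper_succ (by omega) ih.1]⟩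

lemma coeff3_succ_le {n k : ℕ} (hn : 400 ≤ n) (hk : 3 * k ≤ 2 * n + 17) (hk' : 90 * n ≤ 137 * k + 47) :
    5 * (coeff3 n (k + 1) : ℝ) ≤ 9 * coeff3 n k := by
  have h := (coeff3_ratio_bounds hn k hk).2
  have hk'R : 90 * (n : ℝ) ≤ 137 * k + 47 := by exact_mod_cast hk'
  have hf : (0 : ℝ) ≤ coeff3 n k := Nat.cast_nonneg _
  nlinarith [mul_le_mul_of_nonneg_right hk'R hf]

lemma sum_range_le_of_mul_le {f : ℕ → ℝ} {c : ℝ} {m : ℕ} (hf0 : 0 ≤ f 0)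
    (h : ∀ k < m, c * f k ≤ f (k + 1)) : (c - 1) * ∑ i ∈ range m, f i ≤ f m := by
  induction m with
  | zero => simpa using hf0
  | succ m ih =>
    rw [sum_range_succ, mul_add]
    linarith [ih fun k hk => h k (by omega), h m (by omega)]

lemma window_certificate (g x : ℕ → ℝ) (S T : ℝ) (hg0 : ∀ j, 0 ≤ g j)
    (hg : ∀ j < 16, 8 * g j ≤ 5 * g (j + 1)) (hg' : ∀ j, 7 ≤ j → j ≤ 9 → 5 * g (j + 1) ≤ 9 * g j)
    (hS : 3 * S ≤ 5 * g 0) (hT : S * (1 - (x 11 + x 12 + x 13 + x 14) / 2) ≤ T)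
    (hx : ∀ j ≤ 16, 0 ≤ x j) (hxc : ∀ i j k, i + j + k ≤ 28 → 1 ≤ x i + x j + x k) :
    S + ∑ j ∈ range 7, g j + (4 * g 7 + 3 * g 8 + 2 * g 9 + g 10) / 5
      ≤ T + ∑ j ∈ range 17, g j * x j := by
  simp only [Nat.forall_lt_succ_right, Nat.not_lt_zero, IsEmpty.forall_iff, implies_true,
    true_and] at hg
  casesm* _ ∧ _
  have u7 := hg' 7 le_rfl (by norm_num)
  have u8 := hg' 8 (by norm_num) (by norm_num)
  have u9 := hg' 9 (by norm_num) le_rfl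
  -- complementary slackness at `x 7, …, x 10` forces this multiplier on `x 8 + x 9 + x 11 ≥ 1`
  obtain ⟨z, hz⟩ : ∃ z : ℝ, z = (2 * g 7 + 4 * g 8 + g 9 - 2 * g 10) / 5 := ⟨_, rfl⟩
  have hz0 : 0 ≤ z := by linarith
  have hz8 : z ≤ g 8 := by linarith
  have hz9 : z ≤ g 9 := by linarith
  have d11 : S / 2 + g 0 / 2 + g 1 + g 2 + g 3 + g 4 + g 5 + 2 * g 6 + g 7 + z ≤ g 11 := by
    linarith
  have d12 : S / 2 + g 0 / 2 + g 5 ≤ g 12 := by linarith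
  have d13 : S / 2 + g 0 / 2 + g 4 ≤ g 13 := by linarith
  have d14 : S / 2 + g 0 / 2 + g 3 ≤ g 14 := by linarith
  have d15 : g 2 ≤ g 15 := by linarith
  have d16 : g 1 ≤ g 16 := by linarith
  simp only [sum_range_succ, sum_range_zero]
  subst hz
  -- weak duality; `2 x 9 + x 10 ≥ 1` enters with weight `(g 9 - z) / 2`
  linarith [mul_le_mul_of_nonneg_left (hxc 0 11 12 (by norm_num)) (hg0 0),
    mul_le_mul_of_nonneg_left (hxc 0 13 14 (by norm_num)) (hg0 0),
    mul_le_mul_of_nonneg_left (hxc 1 11 16 (by norm_num)) (hg0 1),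
    mul_le_mul_of_nonneg_left (hxc 2 11 15 (by norm_num)) (hg0 2),
    mul_le_mul_of_nonneg_left (hxc 3 11 14 (by norm_num)) (hg0 3),
    mul_le_mul_of_nonneg_left (hxc 4 11 13 (by norm_num)) (hg0 4),
    mul_le_mul_of_nonneg_left (hxc 5 11 12 (by norm_num)) (hg0 5),
    mul_le_mul_of_nonneg_left (hxc 6 11 11 (by norm_num)) (hg0 6),
    mul_le_mul_of_nonneg_left (hxc 7 10 11 (by norm_num)) (hg0 7),
    mul_le_mul_of_nonneg_left (hxc 8 9 11 (by norm_num)) hz0,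
    mul_le_mul_of_nonneg_left (hxc 8 10 10 (by norm_num)) (sub_nonneg.2 hz8),
    mul_le_mul_of_nonneg_left (hxc 9 9 10 (by norm_num)) (sub_nonneg.2 hz9),
    mul_le_mul_of_nonneg_right d11 (hx 11 (by norm_num)),
    mul_le_mul_of_nonneg_right d12 (hx 12 (by norm_num)),
    mul_le_mul_of_nonneg_right d13 (hx 13 (by norm_num)),
    mul_le_mul_of_nonneg_right d14 (hx 14 (by norm_num)),
    mul_le_mul_of_nonneg_right d15 (hx 15 (by norm_num)),
    mul_le_mul_of_nonneg_right d16 (hx 16 (by norm_num))]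

lemma sum_range_mul_le_LPObj {n m : ℕ} {t : ℕ → ℝ} (ht : LPFeasible n t) (hm : m ≤ 2 * n + 1) :
    3 * ∑ i ∈ range m, (coeff3 n i : ℝ) * t i ≤ LPObj n t := by
  have htail : 0 ≤ ∑ i ∈ Ico m (2 * n + 1), (coeff3 n i : ℝ) * t i :=
    sum_nonneg fun i hi => mul_nonneg (Nat.cast_nonneg _) (ht.1 i (by simp at hi; omega))
  rw [LPObj, ← sum_range_add_sum_Ico _ hm]
  linarith

lemma LPObj_eq_of_eq_zero {n m : ℕ} {t : ℕ → ℝ} (hm : m ≤ 2 * n + 1) (ht : ∀ i, m ≤ i → t i = 0) :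
    LPObj n t = 3 * ∑ i ∈ range m, (coeff3 n i : ℝ) * t i := by
  have htail : ∑ i ∈ Ico m (2 * n + 1), (coeff3 n i : ℝ) * t i = 0 :=
    sum_eq_zero fun i hi => by rw [ht i (mem_Ico.1 hi).1, mul_zero]
  rw [LPObj, ← sum_range_add_sum_Ico _ hm, htail, add_zero]

noncomputable def tStar (s : ℕ) : ℕ → ℝ := fun i =>
  if i ≤ 2 * s - 4 then 1
  else if i = 2 * s - 3 then 4 / 5 else if i = 2 * s - 2 then 3 / 5
  else if i = 2 * s - 1 then 2 / 5 else if i = 2 * s then 1 / 5 else 0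

lemma tStar_nonneg (s i : ℕ) : 0 ≤ tStar s i := by
  unfold tStar
  split_ifs <;> norm_num

lemma one_le_tStar_or (s i : ℕ) : 1 ≤ tStar s i ∨ (2 * s + 1 : ℝ) ≤ i + 5 * tStar s i := by
  unfold tStar
  split_ifs
  · exact .inl le_rfl
  all_goals right; norm_num; norm_cast; omega

lemma lpFeasible_tStar {s : ℕ} (hs : 1 ≤ s) : LPFeasible (3 * s - 1) (tStar s) := by
  refine ⟨fun i _ => tStar_nonneg s i, fun i j k hijk => ?_⟩
  have hR : (i + j + k + 2 : ℝ) ≤ 6 * s := by exact_mod_cast (by omega : i + j + k + 2 ≤ 6 * s)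
  have := tStar_nonneg s i
  have := tStar_nonneg s j
  have := tStar_nonneg s k
  rcases one_le_tStar_or s i with hi | hi <;> rcases one_le_tStar_or s j with hj | hj <;>
    rcases one_le_tStar_or s k with hk | hk <;> linarith

lemma LPObj_tStar {s B : ℕ} (hB : 2 * s = B + 10) :
    LPObj (3 * s - 1) (tStar s) = 3 * (∑ i ∈ range (B + 7), (coeff3 (3 * s - 1) i : ℝ)
      + (4 * coeff3 (3 * s - 1) (B + 7) + 3 * coeff3 (3 * s - 1) (B + 8)
        + 2 * coeff3 (3 * s - 1) (B + 9) + coeff3 (3 * s - 1) (B + 10)) / 5) := by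
  have h0 : ∀ i, B + 11 ≤ i → tStar s i = 0 := fun i hi => by
    unfold tStar; split_ifs <;> first | omega | rfl
  have h1 : ∀ i ∈ range (B + 7), (coeff3 (3 * s - 1) i : ℝ) * tStar s i = coeff3 (3 * s - 1) i :=
    fun i hi => by
      rw [mem_range] at hi
      unfold tStar; rw [if_pos (by omega), mul_one]
  have h7 : tStar s (B + 7) = 4 / 5 := by unfold tStar; split_ifs <;> first | omega | rfl
  have h8 : tStar s (B + 8) = 3 / 5 := by unfold tStar; split_ifs <;> first | omega | rfl
  have h9 : tStar s (B + 9) = 2 / 5 := by unfold tStar; split_ifs <;> first | omega | rfl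
  have h10 : tStar s (B + 10) = 1 / 5 := by unfold tStar; split_ifs <;> first | omega | rfl
  rw [LPObj_eq_of_eq_zero (by omega) h0, sum_range_add _ (B + 7) 4, sum_congr rfl h1]
  simp only [sum_range_succ, sum_range_zero, add_zero, add_assoc, Nat.reduceAdd, h7, h8, h9, h10]
  ring

lemma sum_mul_ge_of_lpFeasible {n B : ℕ} (hn : 400 ≤ n) (hnB : 2 * n = 3 * B + 28)
    {t : ℕ → ℝ} (ht : LPFeasible n t) :
    ∑ i ∈ range (B + 7), (coeff3 n i : ℝ)
        + (4 * coeff3 n (B + 7) + 3 * coeff3 n (B + 8) + 2 * coeff3 n (B + 9) + coeff3 n (B + 10)) / 5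
      ≤ ∑ i ∈ range (B + 17), (coeff3 n i : ℝ) * t i := by
  have hratio : ∀ k < B + 16, 8 * (coeff3 n k : ℝ) ≤ 5 * coeff3 n (k + 1) :=
    fun k hk => (coeff3_ratio_bounds hn k (by omega)).1
  have hS : (8 / 5 - 1) * ∑ i ∈ range B, (coeff3 n i : ℝ) ≤ coeff3 n B :=
    sum_range_le_of_mul_le (Nat.cast_nonneg _) fun k hk => by linarith [hratio k (by omega)]
  have hT : (∑ i ∈ range B, (coeff3 n i : ℝ)) * (1 - (t (B + 11) + t (B + 12) + t (B + 13) + t (B + 14)) / 2)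
      ≤ ∑ i ∈ range B, (coeff3 n i : ℝ) * t i := by
    rw [sum_mul]
    refine sum_le_sum fun i hi => mul_le_mul_of_nonneg_left ?_ (Nat.cast_nonneg _)
    have := mem_range.1 hi
    linarith [ht.2 i (B + 11) (B + 12) (by omega), ht.2 i (B + 13) (B + 14) (by omega)]
  rw [sum_range_add, sum_range_add]
  exact window_certificate (fun j => coeff3 n (B + j)) (fun j => t (B + j)) _ _
    (fun j => Nat.cast_nonneg _) (fun j hj => hratio (B + j) (by omega))
    (fun j hj hj' => coeff3_succ_le (k := B + j) hn (by omega) (by omega))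
    (by rw [add_zero]; linarith) hT
    (fun j hj => ht.1 _ (by omega)) (fun i j k h => ht.2 _ _ _ (by omega))

end CapSetLP

open CapSetLP

/-- For `n = 3s - 1` with `s` large, the vector with `tᵢ = 1` for `i ≤ 2s-4`,
`t_{2s-3} = 4/5`, `t_{2s-2} = 3/5`, `t_{2s-1} = 2/5`, `t_{2s} = 1/5` and
`tᵢ = 0` for `i ≥ 2s+1` is an optimal solution of the cap set linear program. -/
theorem lp_optimal_three_s_sub_one :
    ∃ S : ℕ, ∀ s : ℕ, S ≤ s →
      LPFeasible (3 * s - 1) (fun i => if i ≤ 2 * s - 4 then 1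
        else if i = 2 * s - 3 then 4 / 5 else if i = 2 * s - 2 then 3 / 5
        else if i = 2 * s - 1 then 2 / 5 else if i = 2 * s then 1 / 5 else 0) ∧
      ∀ t : ℕ → ℝ, LPFeasible (3 * s - 1) t →
        LPObj (3 * s - 1) (fun i => if i ≤ 2 * s - 4 then 1
          else if i = 2 * s - 3 then 4 / 5 else if i = 2 * s - 2 then 3 / 5
          else if i = 2 * s - 1 then 2 / 5 else if i = 2 * s then 1 / 5 else 0) ≤
        LPObj (3 * s - 1) t := by
  refine ⟨134, fun s hs => ⟨lpFeasible_tStar (by omega), fun t ht => ?_⟩⟩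
  obtain ⟨B, hB⟩ : ∃ B, 2 * s = B + 10 := ⟨2 * s - 10, by omega⟩
  calc LPObj (3 * s - 1) (tStar s)
      _ = 3 * (∑ i ∈ range (B + 7), (coeff3 (3 * s - 1) i : ℝ)
          + (4 * coeff3 (3 * s - 1) (B + 7) + 3 * coeff3 (3 * s - 1) (B + 8)
            + 2 * coeff3 (3 * s - 1) (B + 9) + coeff3 (3 * s - 1) (B + 10)) / 5) := LPObj_tStar hB
      _ ≤ 3 * ∑ i ∈ range (B + 17), (coeff3 (3 * s - 1) i : ℝ) * t i := by
        gcongr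
        exact sum_mul_ge_of_lpFeasible (by omega) (by omega) ht
      _ ≤ LPObj (3 * s - 1) t := sum_range_mul_le_LPObj ht (by omega)
end
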